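/- In Ãₙ, the subgroup N = ⟨pⱼ⁻¹pᵢ : 1 ≤ i,j ≤ n+1⟩ is a normal subgroup: for every generator a_k and every pⱼ⁻¹pᵢ there exist indices m, l with a_k(pⱼ⁻¹pᵢ) = (p_m⁻¹p_l)a_k. -/

import Mathlib

open CoxeterMatrix

/-- The affine Coxeter matrix of type Ãₙ on the cyclic index set `ZMod (n+1)`:
`aᵢ² = 1`, `(aᵢa_{i+1})³ = 1`, and non-adjacent generators (mod n+1) commute. -/
def affineA (n : ℕ) : CoxeterMatrix (ZMod (n + 1)) where
  M := fun i j => if i = j then 1 else if i = j + 1 ∨ j = i + 1 then 3 else 2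
  isSymm := by
    ext i j
    by_cases h : i = j
    · simp [Matrix.transpose_apply, Matrix.transpose, Matrix.of_apply, h]
    · simp only [Matrix.transpose, Matrix.of_apply]
      rw [if_neg h, if_neg (Ne.symm h)]
      exact if_congr or_comm rfl rfl
  diagonal := fun i => by simp
  off_diagonal := fun i j h => by
    simp only [if_neg h]
    split <;> simp

/-- The Coxeter generators `aᵢ` of `Ãₙ`. -/
def aa (n : ℕ) (i : ZMod (n + 1)) : (affineA n).Group := (affineA n).simple i

/-- The cyclic products `pⱼ = a_{j+1} a_{j+2} ⋯ a_{j-1}` (indices mod `n+1`). -/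
def pp (n : ℕ) (j : ZMod (n + 1)) : (affineA n).Group :=
  ((List.range n).map fun k => aa n (j + 1 + (k : ℕ))).prod

/-- `gⱼ = pⱼ⁻¹ p_{j+1}`. -/
def gg (n : ℕ) (j : ZMod (n + 1)) : (affineA n).Group := (pp n j)⁻¹ * pp n (j + 1)

/-- The subgroup `N = ⟨pⱼ⁻¹pᵢ : i, j⟩` of `Ãₙ`. -/
def NN (n : ℕ) : Subgroup (affineA n).Group :=
  Subgroup.closure {x | ∃ i j : ZMod (n + 1), x = (pp n j)⁻¹ * pp n i}

/-- The standard parabolic subgroup `⟨a₁,…,aₙ⟩` of `Ãₙ` (all generators except `a_{n+1} = a₀`). -/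
def parab (n : ℕ) : Subgroup (affineA n).Group :=
  Subgroup.closure {x | ∃ i : ZMod (n + 1), i ≠ 0 ∧ x = aa n i}

/-!
Write `σₖ` for the transposition of `k` and `k + 1` in `ZMod (n + 1)`. The key identity is
`a_{k+1} pⱼ = p_{σₖ j} aₖ`. For `j = k` and `j = k + 1` it follows by peeling one generator off
either end of the cyclic word `pⱼ`. Otherwise `a_{k+1}` commutes past the letters of `pⱼ` up to
the adjacent pair `aₖ a_{k+1}`, the braid relation turns it into `aₖ`, and `aₖ` commutes past the
remaining letters. Inverting the identity gives `aₖ pⱼ⁻¹ pᵢ = p_{σₖ j}⁻¹ p_{σₖ i} aₖ`, so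
conjugation by each Coxeter generator maps the generators of `N` to generators of `N`.
-/

open Equiv

theorem Subgroup.closure_normal_of_conj_mem {G : Type*} [Group G] {S T : Set G}
    (hT : Submonoid.closure T = ⊤) (hS : ∀ t ∈ T, ∀ x ∈ S, t * x * t⁻¹ ∈ closure S) :
    (closure S).Normal := by
  have hgen : ∀ t ∈ T, ∀ x ∈ closure S, t * x * t⁻¹ ∈ closure S := by
    intro t ht x hx
    have : (closure S).map (MulAut.conj t).toMonoidHom ≤ closure S := by
      rw [MonoidHom.map_closure, closure_le]
      rintro _ ⟨y, hy, rfl⟩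
      exact hS t ht y hy
    exact this ⟨x, hx, rfl⟩
  suffices ∀ g : G, ∀ x ∈ closure S, g * x * g⁻¹ ∈ closure S from ⟨fun x hx g => this g x hx⟩
  intro g
  induction (hT ▸ Submonoid.mem_top g : g ∈ Submonoid.closure T)
    using Submonoid.closure_induction with
  | mem t ht => exact hgen t ht
  | one => simp
  | mul g h _ _ hg hh =>
    intro x hx
    simpa only [mul_inv_rev, mul_assoc] using hg _ (hh x hx)

theorem ZMod.natCast_ne_natCast_of_lt {m a b : ℕ} (ha : a < m) (hb : b < m) (hab : a ≠ b) :
    (a : ZMod m) ≠ b := fun h =>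
  hab (by simpa [ZMod.val_cast_of_lt ha, ZMod.val_cast_of_lt hb] using congrArg ZMod.val h)

theorem mul_eq_mul_of_braid_of_commute {G : Type*} [Group G] {x y P Q : G}
    (hP : Commute y P) (hQ : Commute x Q) (hxy : y * x * y = x * y * x) :
    y * (P * (x * y) * Q) = P * (x * y) * Q * x := by
  calc y * (P * (x * y) * Q) = y * P * (x * y) * Q := by group
    _ = P * (y * x * y) * Q := by rw [hP.eq]; group
    _ = P * (x * y) * (x * Q) := by rw [hxy]; group
    _ = P * (x * y) * Q * x := by rw [hQ.eq]; group

section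

variable {n : ℕ}

theorem aa_mul_self (i : ZMod (n + 1)) : aa n i * aa n i = 1 :=
  (affineA n).toCoxeterSystem.simple_mul_simple_self i

theorem aa_inv (i : ZMod (n + 1)) : (aa n i)⁻¹ = aa n i :=
  (affineA n).toCoxeterSystem.inv_simple i

theorem aa_braid (hn : 1 ≤ n) (i : ZMod (n + 1)) :
    aa n (i + 1) * aa n i * aa n (i + 1) = aa n i * aa n (i + 1) * aa n i := by
  have h₁ : ((1 : ℕ) : ZMod (n + 1)) ≠ (0 : ℕ) :=
    ZMod.natCast_ne_natCast_of_lt (by omega) (by omega) one_ne_zero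
  have hne : i + 1 ≠ i := fun h => h₁ (by push_cast; linear_combination h)
  have h : (aa n (i + 1) * aa n i) ^ affineA n (i + 1) i = 1 :=
    (affineA n).toCoxeterSystem.simple_mul_simple_pow (i + 1) i
  rw [show affineA n (i + 1) i = 3 by simp [affineA, hne]] at h
  have h' : (aa n (i + 1) * aa n i * aa n (i + 1)) * (aa n i * aa n (i + 1) * aa n i) = 1 := by
    rw [← h, pow_succ, pow_succ, pow_one]; simp only [mul_assoc]
  rw [eq_inv_of_mul_eq_one_left h']
  simp only [mul_inv_rev, aa_inv, mul_assoc]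

theorem aa_commute {i j : ZMod (n + 1)} (h₀ : i ≠ j) (h₁ : i ≠ j + 1) (h₂ : j ≠ i + 1) :
    Commute (aa n i) (aa n j) := by
  have h : (aa n i * aa n j) ^ affineA n i j = 1 :=
    (affineA n).toCoxeterSystem.simple_mul_simple_pow i j
  rw [show affineA n i j = 2 by simp [affineA, h₀, h₁, h₂], pow_two] at h
  rw [Commute, SemiconjBy, eq_inv_of_mul_eq_one_left h, mul_inv_rev, aa_inv, aa_inv]

theorem aa_commute_add_natCast (c : ZMod (n + 1)) {d : ℕ} (hd : 2 ≤ d) (hdn : d < n) :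
    Commute (aa n c) (aa n (c + d)) := by
  have hne {a b : ℕ} (ha : a ≤ n) (hb : b ≤ n) (hab : a ≠ b) : (a : ZMod (n + 1)) ≠ b :=
    ZMod.natCast_ne_natCast_of_lt (by omega) (by omega) hab
  refine aa_commute (fun h => ?_) (fun h => ?_) (fun h => ?_)
  · exact hne (a := d) (b := 0) (by omega) (by omega) (by omega)
      (by push_cast; linear_combination -h)
  · exact hne (a := d + 1) (b := 0) (by omega) (by omega) (by omega)
      (by push_cast; linear_combination -h)
  · exact hne (a := d) (b := 1) (by omega) (by omega) (by omega)
      (by push_cast; linear_combination h)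

def aaSeg (n : ℕ) (c : ZMod (n + 1)) (m : ℕ) : (affineA n).Group :=
  ((List.range m).map fun k : ℕ => aa n (c + k)).prod

theorem pp_eq_aaSeg (j : ZMod (n + 1)) : pp n j = aaSeg n (j + 1) n := rfl

theorem aaSeg_add (c : ZMod (n + 1)) (m₁ m₂ : ℕ) :
    aaSeg n c (m₁ + m₂) = aaSeg n c m₁ * aaSeg n (c + m₁) m₂ := by
  simp only [aaSeg, List.range_add, List.map_append, List.prod_append, List.map_map]
  congr 3
  ext k
  simp [add_assoc]

theorem aaSeg_one (c : ZMod (n + 1)) : aaSeg n c 1 = aa n c := by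
  simp [aaSeg]

theorem aaSeg_two (c : ZMod (n + 1)) : aaSeg n c 2 = aa n c * aa n (c + 1) := by
  simp [aaSeg, List.range_succ]

theorem aaSeg_succ (c : ZMod (n + 1)) (m : ℕ) :
    aaSeg n c (m + 1) = aaSeg n c m * aa n (c + m) := by
  rw [aaSeg_add, aaSeg_one]

theorem aaSeg_succ' (c : ZMod (n + 1)) (m : ℕ) :
    aaSeg n c (m + 1) = aa n c * aaSeg n (c + 1) m := by
  rw [Nat.add_comm m 1, aaSeg_add, aaSeg_one, Nat.cast_one]

theorem Commute.aaSeg_right {x : (affineA n).Group} {c : ZMod (n + 1)} {m : ℕ}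
    (h : ∀ k < m, Commute x (aa n (c + k))) : Commute x (aaSeg n c m) :=
  Commute.list_prod_right _ _ (by simpa using h)

theorem pp_succ_eq_aa_mul (m : ℕ) (j : ZMod (m + 1 + 1)) :
    pp (m + 1) j = aa (m + 1) (j + 1) * aaSeg (m + 1) (j + 1 + 1) m := by
  rw [pp_eq_aaSeg, aaSeg_succ']

theorem pp_succ_eq_mul_aa (m : ℕ) (j : ZMod (m + 1 + 1)) :
    pp (m + 1) (j + 1) = aaSeg (m + 1) (j + 1 + 1) m * aa (m + 1) j := by
  rw [pp_eq_aaSeg, aaSeg_succ]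
  congr 2
  have := ZMod.natCast_self (m + 1 + 1)
  push_cast at this
  linear_combination this

theorem aa_add_one_mul_pp_add_one (hn : 1 ≤ n) (k : ZMod (n + 1)) :
    aa n (k + 1) * pp n (k + 1) = pp n k * aa n k := by
  obtain ⟨m, rfl⟩ : ∃ m, n = m + 1 := ⟨n - 1, by omega⟩
  rw [pp_succ_eq_mul_aa, pp_succ_eq_aa_mul, mul_assoc]

theorem aa_add_one_mul_pp_self (hn : 1 ≤ n) (k : ZMod (n + 1)) :
    aa n (k + 1) * pp n k = pp n (k + 1) * aa n k := by
  obtain ⟨m, rfl⟩ : ∃ m, n = m + 1 := ⟨n - 1, by omega⟩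
  rw [pp_succ_eq_aa_mul, pp_succ_eq_mul_aa, ← mul_assoc, aa_mul_self, one_mul, mul_assoc,
    aa_mul_self, mul_one]

theorem aa_add_one_mul_pp_of_lt {t : ℕ} (ht : 1 ≤ t) (htn : t < n) (j : ZMod (n + 1)) :
    aa n (j + (t : ZMod (n + 1)) + 1) * pp n j = pp n j * aa n (j + t) := by
  obtain ⟨s, rfl⟩ : ∃ s, t = s + 1 := ⟨t - 1, by omega⟩
  obtain ⟨r, hr⟩ : ∃ r, n = s + 2 + r := ⟨n - (s + 2), by omega⟩
  set x : ZMod (n + 1) := j + 1 + s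
  have hsplit : pp n j =
      aaSeg n (j + 1) s * (aa n x * aa n (x + 1)) * aaSeg n (j + 1 + (s + 2 : ℕ)) r := by
    rw [pp_eq_aaSeg, congrArg (aaSeg n (j + 1)) hr, aaSeg_add, aaSeg_add, aaSeg_two]
  have hP : Commute (aa n (x + 1)) (aaSeg n (j + 1) s) := by
    refine Commute.aaSeg_right fun k hk => ?_
    have e : x + 1 = j + 1 + k + (s + 1 - k : ℕ) := by
      rw [Nat.cast_sub (by omega)]; push_cast; ring
    rw [e]
    exact (aa_commute_add_natCast _ (by omega) (by omega)).symm
  have hQ : Commute (aa n x) (aaSeg n (j + 1 + (s + 2 : ℕ)) r) := by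
    refine Commute.aaSeg_right fun k hk => ?_
    have e : j + 1 + ((s + 2 : ℕ) : ZMod (n + 1)) + k = x + (k + 2 : ℕ) := by
      push_cast; ring
    rw [e]
    exact aa_commute_add_natCast _ (by omega) (by omega)
  have hx : j + ((s + 1 : ℕ) : ZMod (n + 1)) = x := by push_cast; ring
  rw [hx, hsplit]
  exact mul_eq_mul_of_braid_of_commute hP hQ (aa_braid (by omega) x)

theorem aa_add_one_mul_pp (hn : 1 ≤ n) (k j : ZMod (n + 1)) :
    aa n (k + 1) * pp n j = pp n (swap k (k + 1) j) * aa n k := by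
  rcases eq_or_ne j k with rfl | hjk
  · rw [swap_apply_left]
    exact aa_add_one_mul_pp_self hn j
  rcases eq_or_ne j (k + 1) with rfl | hjk₁
  · rw [swap_apply_right]
    exact aa_add_one_mul_pp_add_one hn k
  rw [swap_apply_of_ne_of_ne hjk hjk₁]
  set t := (k - j).val
  have hk : k = j + (t : ZMod (n + 1)) := by simp [t]
  have ht₀ : t ≠ 0 := fun h => hjk (by simp [hk, h])
  have htn : t ≠ n := fun h => hjk₁ (by
    rw [hk, h]
    linear_combination -(ZMod.natCast_self' n))
  have := aa_add_one_mul_pp_of_lt (t := t) (by omega) (by have := ZMod.val_lt (k - j); omega) j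
  rwa [← hk] at this

theorem aa_mul_pp_inv_mul_pp (hn : 1 ≤ n) (k i j : ZMod (n + 1)) :
    aa n k * ((pp n j)⁻¹ * pp n i) =
      (pp n (swap k (k + 1) j))⁻¹ * pp n (swap k (k + 1) i) * aa n k := by
  have hj : aa n k * (pp n j)⁻¹ = (pp n (swap k (k + 1) j))⁻¹ * aa n (k + 1) := by
    have := aa_add_one_mul_pp hn k (swap k (k + 1) j)
    rw [swap_apply_self] at this
    rw [← aa_inv k, ← mul_inv_rev, ← this, mul_inv_rev, aa_inv]
  rw [← mul_assoc, hj, mul_assoc, aa_add_one_mul_pp hn k i, mul_assoc]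

end

/-- In `Ãₙ`, the subgroup `N = ⟨pⱼ⁻¹pᵢ⟩` is normal: for every generator `a_k` and every
`pⱼ⁻¹pᵢ` there exist indices `m, l` with `a_k (pⱼ⁻¹pᵢ) = (p_m⁻¹p_l) a_k`. -/
theorem stmt9 (n : ℕ) (hn : 2 ≤ n) :
    (∀ k i j : ZMod (n + 1), ∃ m l : ZMod (n + 1),
      aa n k * ((pp n j)⁻¹ * pp n i) = ((pp n m)⁻¹ * pp n l) * aa n k) ∧
    (NN n).Normal := by
  have hconj := aa_mul_pp_inv_mul_pp (n := n) (by omega)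
  refine ⟨fun k i j => ⟨_, _, hconj k i j⟩, ?_⟩
  refine Subgroup.closure_normal_of_conj_mem
    (affineA n).toCoxeterSystem.submonoid_closure_range_simple ?_
  rintro _ ⟨k, rfl⟩ _ ⟨i, j, rfl⟩
  refine Subgroup.subset_closure ⟨swap k (k + 1) i, swap k (k + 1) j, ?_⟩
  change aa n k * _ * (aa n k)⁻¹ = _
  rw [hconj, mul_inv_cancel_right]
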